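/- arXiv:2304.10962 — 3 statements merged into one kernel-verified Lean document; each statement's English description precedes it below -/
import Mathlib

section
/- Let A = (Q, Σ, δ, s, F) be a DFA in which the initial state s has no incoming transitions and every state is reachable from s. Let K = {inf I_u : u ∈ Q} ∪ {sup I_u : u ∈ Q}, totally ordered by the co-lex order, and for α ∈ K let rank(α) denote the position of α in (K, <). For each state u ∈ Q define s_u = rank(inf I_u), f_u = rank(sup I_u), s'_u = 2·s_u + 1, f'_u = 2·f_u, s''_u = min(s'_u, f'_u), and f''_u = max(s'_u, f'_u). Then for any two distinct states u, v ∈ Q with s_u ≤ s_v: f_u ≤ s_v if and only if f''_u < s''_v. -/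
/-- A (possibly left-infinite) string over alphabet `A`, indexed from the END:
`f i` is the `i`-th character from the right, and `⊥` means the position is
past the beginning of the string.  The elements of `Σ* ∪ Σ^ω` are the
well-formed (`CStr.WF`) such functions. -/
abbrev CStr (A : Type*) := ℕ → WithBot A

/-- Well-formed: once we run out of characters going leftwards, it stays so. -/
def CStr.WF {A : Type*} (f : CStr A) : Prop := ∀ i, f i = ⊥ → f (i + 1) = ⊥

/-- The string is finite (an element of `Σ*`). -/
def CStr.Finite {A : Type*} (f : CStr A) : Prop := ∃ i, f i = ⊥

/-- Length of a finite string. -/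
noncomputable def CStr.length {A : Type*} (f : CStr A) : ℕ := sInf {i | f i = ⊥}

/-- A finite string, given as a list read left-to-right, viewed as a `CStr`. -/
def CStr.ofList {A : Type*} (w : List A) : CStr A := fun i =>
  if h : i < w.length then (w.get ⟨w.length - 1 - i, by omega⟩ : WithBot A) else ⊥

/-- The co-lexicographic (strict) order on `Σ* ∪ Σ^ω`: compare the last
characters first (position `0`), a missing character (`⊥`) being smaller
than every character of the alphabet. -/
def colexLt {A : Type*} [LinearOrder A] (f g : CStr A) : Prop :=
  ∃ i, (∀ j, j < i → f j = g j) ∧ f i < g i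

/-- The non-strict co-lex order. -/
def colexLe {A : Type*} [LinearOrder A] (f g : CStr A) : Prop := colexLt f g ∨ f = g

/-- `g` is the greatest lower bound (infimum) of `S` in `(Σ* ∪ Σ^ω, ≤)`. -/
def IsColexGLB {A : Type*} [LinearOrder A] (S : Set (CStr A)) (g : CStr A) : Prop :=
  g.WF ∧ (∀ f ∈ S, colexLe g f) ∧ ∀ h, CStr.WF h → (∀ f ∈ S, colexLe h f) → colexLe h g

/-- `g` is the least upper bound (supremum) of `S` in `(Σ* ∪ Σ^ω, ≤)`. -/
def IsColexLUB {A : Type*} [LinearOrder A] (S : Set (CStr A)) (g : CStr A) : Prop :=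
  g.WF ∧ (∀ f ∈ S, colexLe f g) ∧ ∀ h, CStr.WF h → (∀ f ∈ S, colexLe f h) → colexLe g h

/-- A DFA `(Q, A, δ, start, accept)` with a partial transition function. -/
structure PDFA (A Q : Type*) where
  δ : Q → A → Option Q
  start : Q
  accept : Set Q

/-- The transition function extended to finite strings (read left-to-right). -/
def PDFA.δStar {A Q : Type*} (M : PDFA A Q) : Q → List A → Option Q
  | q, [] => some q
  | q, a :: w => (M.δ q a).bind fun q' => M.δStar q' w

/-- `I_u`: the set of finite strings reaching `u` from the initial state. -/
def PDFA.I {A Q : Type*} (M : PDFA A Q) (u : Q) : Set (List A) :=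
  {w | M.δStar M.start w = some u}

/-- The initial state has no incoming transitions. -/
def PDFA.NoIncomingStart {A Q : Type*} (M : PDFA A Q) : Prop :=
  ∀ v a, M.δ v a ≠ some M.start

/-- Every state is reachable from the initial state. -/
def PDFA.Reachable {A Q : Type*} (M : PDFA A Q) : Prop :=
  ∀ u, ∃ w : List A, M.δStar M.start w = some u

/-- Input consistency: all transitions entering a state `u` carry the same
label `lam u`. -/
def PDFA.InputConsistent {A Q : Type*} (M : PDFA A Q) (lam : Q → A) : Prop :=
  ∀ v a u, M.δ v a = some u → lam u = a

/-- The maximum co-lex order `<_A` on the states of a DFA: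
`u <_A v` iff `α < β` for every `α ∈ I_u` and every `β ∈ I_v`. -/
def PDFA.colexStateLt {A Q : Type*} [LinearOrder A] (M : PDFA A Q) (u v : Q) : Prop :=
  ∀ α ∈ M.I u, ∀ β ∈ M.I v, colexLt (CStr.ofList α) (CStr.ofList β)

/-- The rank (position) of a string `x` in a finite, co-lex totally ordered
set `K` of strings: the number of elements of `K` that are `≤ x`. -/
noncomputable def colexRank {A : Type*} [LinearOrder A] (K : Set (CStr A)) (x : CStr A) : ℕ :=
  Set.ncard {y ∈ K | colexLe y x}
section MyColexAux

variable {A : Type*} [LinearOrder A]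

theorem my_colexLt_irrefl (f : CStr A) : ¬ colexLt f f := by
  rintro ⟨i, -, hi⟩; exact lt_irrefl _ hi

theorem my_colexLt_trans {f g h : CStr A} (h1 : colexLt f g) (h2 : colexLt g h) :
    colexLt f h := by
  obtain ⟨i, hi, hfi⟩ := h1
  obtain ⟨j, hj, hgj⟩ := h2
  rcases lt_trichotomy i j with hij | rfl | hij
  · exact ⟨i, fun k hk => (hi k hk).trans (hj k (hk.trans hij)), hfi.trans_eq (hj i hij)⟩
  · exact ⟨i, fun k hk => (hi k hk).trans (hj k hk), hfi.trans hgj⟩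
  · exact ⟨j, fun k hk => (hi k (hk.trans hij)).trans (hj k hk), (hi j hij).trans_lt hgj⟩

theorem my_colexLt_asymm {f g : CStr A} (h1 : colexLt f g) (h2 : colexLt g f) : False :=
  my_colexLt_irrefl f (my_colexLt_trans h1 h2)

theorem my_colexLt_total {f g : CStr A} (hne : f ≠ g) : colexLt f g ∨ colexLt g f := by
  classical
  have hex : ∃ i, f i ≠ g i := by
    by_contra hc; push_neg at hc; exact hne (funext hc)
  have h1 : f (Nat.find hex) ≠ g (Nat.find hex) := Nat.find_spec hex
  have h2 : ∀ j < Nat.find hex, f j = g j := fun j hj => by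
    have := Nat.find_min hex hj; simpa using this
  rcases h1.lt_or_gt with h | h
  · exact Or.inl ⟨_, h2, h⟩
  · exact Or.inr ⟨_, fun j hj => (h2 j hj).symm, h⟩

theorem my_colexLe_of_not_lt {f g : CStr A} (h : ¬ colexLt g f) : colexLe f g := by
  by_cases he : f = g
  · exact Or.inr he
  · rcases my_colexLt_total he with h1 | h1
    · exact Or.inl h1
    · exact absurd h1 h

theorem my_colexLe_trans {f g h : CStr A} (h1 : colexLe f g) (h2 : colexLe g h) :
    colexLe f h := by
  rcases h1 with h1 | rfl
  · rcases h2 with h2 | rfl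
    · exact Or.inl (my_colexLt_trans h1 h2)
    · exact Or.inl h1
  · exact h2

theorem my_colexLe_antisymm {f g : CStr A} (h1 : colexLe f g) (h2 : colexLe g f) : f = g := by
  rcases h1 with h1 | rfl
  · rcases h2 with h2 | rfl
    · exact absurd (my_colexLt_trans h1 h2) (my_colexLt_irrefl f)
    · rfl
  · rfl

theorem my_not_colexLe_of_lt {f g : CStr A} (h : colexLt f g) (h2 : colexLe g f) : False := by
  rcases h2 with h2 | rfl
  · exact my_colexLt_asymm h h2
  · exact my_colexLt_irrefl _ h

theorem my_colexRank_mono {K : Set (CStr A)} (hK : K.Finite) {x y : CStr A}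
    (hxy : colexLe x y) : colexRank K x ≤ colexRank K y := by
  apply Set.ncard_le_ncard _ (hK.subset (Set.sep_subset _ _))
  rintro z ⟨hz, hle⟩
  exact ⟨hz, my_colexLe_trans hle hxy⟩

theorem my_colexRank_lt {K : Set (CStr A)} (hK : K.Finite) {x y : CStr A} (hy : y ∈ K)
    (hxy : colexLt x y) : colexRank K x < colexRank K y := by
  apply Set.ncard_lt_ncard _ (hK.subset (Set.sep_subset _ _))
  rw [Set.ssubset_def]
  constructor
  · rintro z ⟨hz, hle⟩
    exact ⟨hz, my_colexLe_trans hle (Or.inl hxy)⟩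
  · intro hsub
    have hmem : y ∈ {z ∈ K | colexLe z x} := hsub ⟨hy, Or.inr rfl⟩
    exact my_not_colexLe_of_lt hxy hmem.2

theorem my_colexRank_injOn {K : Set (CStr A)} (hK : K.Finite) {x y : CStr A}
    (hx : x ∈ K) (hy : y ∈ K) (h : colexRank K x = colexRank K y) : x = y := by
  by_contra hne
  rcases my_colexLt_total hne with h1 | h1
  · exact absurd h (Nat.ne_of_lt (my_colexRank_lt hK hy h1))
  · exact absurd h.symm (Nat.ne_of_lt (my_colexRank_lt hK hx h1))

end MyColexAux
section MyOfListAux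

variable {A : Type*} [LinearOrder A]

theorem my_ofList_apply_of_le {w : List A} {i : ℕ} (h : w.length ≤ i) :
    CStr.ofList w i = ⊥ := dif_neg (by omega)

theorem my_ofList_ne_bot {w : List A} {i : ℕ} (h : i < w.length) :
    CStr.ofList w i ≠ ⊥ := by
  show (if h : i < w.length then (w.get ⟨w.length - 1 - i, by omega⟩ : WithBot A) else ⊥) ≠ ⊥
  rw [dif_pos h]
  exact WithBot.coe_ne_bot

theorem my_ofList_len_le {w : List A} {i : ℕ} (h : CStr.ofList w i = ⊥) : w.length ≤ i := by
  by_contra hc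
  exact my_ofList_ne_bot (not_le.mp hc) h

theorem my_ofList_WF (w : List A) : (CStr.ofList w).WF := fun i hi =>
  my_ofList_apply_of_le (le_trans (my_ofList_len_le hi) (Nat.le_succ i))

theorem my_ofList_cons_length (a : A) (w : List A) :
    CStr.ofList (a :: w) w.length = (a : WithBot A) := by
  show (if h : w.length < (a :: w).length then
      ((a :: w).get ⟨(a :: w).length - 1 - w.length, by simp only [List.length_cons]; omega⟩ : WithBot A) else ⊥) = _
  rw [dif_pos (by simp)]
  have h1 : ((⟨(a :: w).length - 1 - w.length, by simp only [List.length_cons]; omega⟩ : Fin (a :: w).length)) =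
      ⟨0, by simp⟩ := Fin.ext (by simp)
  rw [h1]
  rfl

theorem my_ofList_cons_apply_lt (a : A) {w : List A} {i : ℕ} (h : i < w.length) :
    CStr.ofList (a :: w) i = CStr.ofList w i := by
  have h' : i < (a :: w).length := by simp; omega
  show (if h : i < (a :: w).length then
      ((a :: w).get ⟨(a :: w).length - 1 - i, by omega⟩ : WithBot A) else ⊥) =
    (if h : i < w.length then (w.get ⟨w.length - 1 - i, by omega⟩ : WithBot A) else ⊥)
  rw [dif_pos h', dif_pos h]
  have h1 : ((⟨(a :: w).length - 1 - i, by omega⟩ : Fin (a :: w).length)) =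
      ⟨(w.length - 1 - i) + 1, by simp; omega⟩ := Fin.ext (by simp; omega)
  rw [h1]
  congr 1

end MyOfListAux
section MyMainAux

variable {A : Type*} [LinearOrder A]

theorem my_ofList_injective : Function.Injective (CStr.ofList (A := A)) := by
  intro w v h
  induction w generalizing v with
  | nil =>
    cases v with
    | nil => rfl
    | cons b v' =>
      have hc := congrFun h v'.length
      rw [my_ofList_apply_of_le (by simp), my_ofList_cons_length] at hc
      exact absurd hc.symm WithBot.coe_ne_bot
  | cons a w' ih =>
    cases v with
    | nil =>
      have hc := congrFun h w'.length
      rw [my_ofList_apply_of_le (w := ([] : List A)) (by simp), my_ofList_cons_length] at hc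
      exact absurd hc WithBot.coe_ne_bot
    | cons b v' =>
      have hlen : w'.length = v'.length := by
        by_contra hne
        rcases Nat.lt_or_ge w'.length v'.length with hl | hl
        · have hc := congrFun h (w'.length + 1)
          rw [my_ofList_apply_of_le (by simp)] at hc
          exact my_ofList_ne_bot (by simp; omega) hc.symm
        · have hl' : v'.length < w'.length := by omega
          have hc := congrFun h (v'.length + 1)
          rw [my_ofList_apply_of_le (w := b :: v') (by simp)] at hc
          exact my_ofList_ne_bot (by simp; omega) hc
      have hhead : a = b := by
        have hc := congrFun h w'.length
        rw [my_ofList_cons_length, hlen, my_ofList_cons_length] at hc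
        exact_mod_cast hc
      have htail : CStr.ofList w' = CStr.ofList v' := by
        funext i
        rcases Nat.lt_or_ge i w'.length with hi | hi
        · have hc := congrFun h i
          rw [my_ofList_cons_apply_lt a hi, my_ofList_cons_apply_lt b (hlen ▸ hi)] at hc
          exact hc
        · rw [my_ofList_apply_of_le hi, my_ofList_apply_of_le (by omega)]
      rw [hhead, ih htail]

theorem my_wb_le_max {x : WithBot A} {Mx : A} (hMx : ∀ y : A, y ≤ Mx) : x ≤ (Mx : WithBot A) := by
  induction x using WithBot.recBotCoe with
  | bot => exact bot_le
  | coe y => exact WithBot.coe_le_coe.mpr (hMx y)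

theorem my_wb_le_pred {x : WithBot A} {c c' : A} (h : x < (c : WithBot A))
    (h2 : ∀ y : A, y < c → y ≤ c') : x ≤ (c' : WithBot A) := by
  induction x using WithBot.recBotCoe with
  | bot => exact bot_le
  | coe y => exact WithBot.coe_le_coe.mpr (h2 y (WithBot.coe_lt_coe.mp h))

theorem my_wb_not_lt_min {x : WithBot A} {m : A} (hm : ∀ y : A, m ≤ y) (h0 : ⊥ < x)
    (h : x < (m : WithBot A)) : False := by
  induction x using WithBot.recBotCoe with
  | bot => exact lt_irrefl _ h0
  | coe y => exact absurd (WithBot.coe_lt_coe.mp h) (not_lt.mpr (hm y))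

theorem my_wb_eq_bot_of_lt {x : WithBot A} {c : A} (h : x < (c : WithBot A))
    (hno : ¬ ∃ y : A, y < c) : x = ⊥ := by
  induction x using WithBot.recBotCoe with
  | bot => rfl
  | coe y => exact absurd ⟨y, WithBot.coe_lt_coe.mp h⟩ hno

/-- `m :: w` is the successor of `w` (for `m` the least character). -/
theorem my_succ_lemma {m : A} (hm : ∀ x : A, m ≤ x) (w : List A) :
    colexLt (CStr.ofList w) (CStr.ofList (m :: w)) ∧
      ∀ α : List A, colexLt (CStr.ofList w) (CStr.ofList α) →
        colexLe (CStr.ofList (m :: w)) (CStr.ofList α) := by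
  constructor
  · refine ⟨w.length, fun j hj => (my_ofList_cons_apply_lt m hj).symm, ?_⟩
    rw [my_ofList_apply_of_le (le_refl _), my_ofList_cons_length]
    exact WithBot.bot_lt_coe m
  · intro α hα
    obtain ⟨i, hag, hlt⟩ := hα
    have hin : i ≤ w.length := by
      by_contra hc
      push_neg at hc
      have h1 := hag w.length hc
      rw [my_ofList_apply_of_le (le_refl _)] at h1
      have h2 : α.length ≤ i := le_trans (my_ofList_len_le h1.symm) (le_of_lt hc)
      rw [my_ofList_apply_of_le (by omega), my_ofList_apply_of_le h2] at hlt
      exact lt_irrefl _ hlt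
    apply my_colexLe_of_not_lt
    rintro ⟨j, hag', hlt'⟩
    rcases lt_trichotomy j i with hji | rfl | hij
    · have e1 : CStr.ofList α j = CStr.ofList w j := (hag j hji).symm
      rw [e1, my_ofList_cons_apply_lt m (by omega)] at hlt'
      exact lt_irrefl _ hlt'
    · rcases Nat.lt_or_ge j w.length with hjn | hjn
      · rw [my_ofList_cons_apply_lt m hjn] at hlt'
        exact lt_irrefl _ (hlt.trans hlt')
      · have hj : j = w.length := by omega
        subst hj
        rw [my_ofList_apply_of_le (le_refl _)] at hlt
        rw [my_ofList_cons_length] at hlt'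
        exact my_wb_not_lt_min hm hlt hlt'
    · have e1 : CStr.ofList α i = CStr.ofList (m :: w) i := hag' i hij
      rcases Nat.lt_or_ge i w.length with hin' | hin'
      · rw [my_ofList_cons_apply_lt m hin'] at e1
        rw [e1] at hlt
        exact lt_irrefl _ hlt
      · have hi : i = w.length := by omega
        subst hi
        have hjlen : w.length < j := hij
        rw [my_ofList_apply_of_le (w := m :: w) (by simp; omega)] at hlt'
        exact not_lt_bot hlt'

/-- Every nonempty finite string has a "predecessor" upper bound. -/
theorem my_pred_lemma [Fintype A] (c : A) (w' : List A) :
    ∃ h : CStr A, h.WF ∧ colexLt h (CStr.ofList (c :: w')) ∧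
      ∀ α : List A, colexLt (CStr.ofList α) (CStr.ofList (c :: w')) →
        colexLe (CStr.ofList α) h := by
  classical
  by_cases hex : ∃ x : A, x < c
  · -- h agrees with w' below, then pred(c), then max forever
    obtain ⟨Mx, hMx⟩ : ∃ Mx : A, ∀ y : A, y ≤ Mx :=
      ⟨Finset.univ.max' ⟨c, Finset.mem_univ c⟩,
        fun y => Finset.le_max' _ y (Finset.mem_univ y)⟩
    obtain ⟨c', hc'lt, hc'max⟩ : ∃ c' : A, c' < c ∧ ∀ y : A, y < c → y ≤ c' := by
      obtain ⟨x, hx⟩ := hex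
      have hne : (Finset.univ.filter (· < c)).Nonempty :=
        ⟨x, by simp [hx]⟩
      refine ⟨(Finset.univ.filter (· < c)).max' hne, ?_, ?_⟩
      · have := (Finset.univ.filter (· < c)).max'_mem hne
        simpa using this
      · intro y hy
        exact Finset.le_max' _ y (by simp [hy])
    refine ⟨fun i => if i < w'.length then CStr.ofList w' i
        else if i = w'.length then (c' : WithBot A) else (Mx : WithBot A), ?_, ?_, ?_⟩
    · intro i hi
      exfalso
      dsimp only at hi
      split_ifs at hi with h1 h2
      · exact my_ofList_ne_bot h1 hi
      · exact WithBot.coe_ne_bot hi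
      · exact WithBot.coe_ne_bot hi
    · refine ⟨w'.length, fun j hj => ?_, ?_⟩
      · simp only [if_pos hj]
        exact (my_ofList_cons_apply_lt c hj).symm
      · simp only [lt_irrefl, if_neg (lt_irrefl w'.length), if_pos rfl]
        rw [my_ofList_cons_length]
        exact WithBot.coe_lt_coe.mpr hc'lt
    · intro α hα
      obtain ⟨i, hag, hlt⟩ := hα
      have hin : i ≤ w'.length := by
        by_contra hc2
        push_neg at hc2
        rw [my_ofList_apply_of_le (w := c :: w') (by simp; omega)] at hlt
        exact not_lt_bot hlt
      apply my_colexLe_of_not_lt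
      rintro ⟨j, hag', hlt'⟩
      have hagw : ∀ k, k < i → CStr.ofList α k = CStr.ofList w' k := fun k hk => by
        rw [hag k hk, my_ofList_cons_apply_lt c (by omega)]
      rcases Nat.lt_or_ge j i with hji | hij
      · -- h j = ofList w' j = α j, contradiction with hlt'
        simp only [if_pos (show j < w'.length by omega)] at hlt'
        rw [← hagw j hji] at hlt'
        exact lt_irrefl _ hlt'
      · rcases Nat.lt_or_ge i w'.length with hiw | hiw
        · -- case i < w'.length : α i < w' i = h i
          rw [my_ofList_cons_apply_lt c hiw] at hlt
          rcases Nat.eq_or_lt_of_le hij with rfl | hij'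
          · simp only [if_pos hiw] at hlt'
            exact lt_irrefl _ (hlt.trans hlt')
          · have e1 := hag' i hij'
            simp only [if_pos hiw] at e1
            rw [← e1] at hlt
            exact lt_irrefl _ hlt
        · -- case i = w'.length
          have hi : i = w'.length := by omega
          subst hi
          rw [my_ofList_cons_length] at hlt
          have hαi : CStr.ofList α w'.length ≤ (c' : WithBot A) := my_wb_le_pred hlt hc'max
          rcases Nat.eq_or_lt_of_le hij with rfl | hij'
          · simp only [if_neg (lt_irrefl w'.length), if_pos rfl] at hlt'
            exact absurd hαi (not_le.mpr hlt')
          · have hjw : ¬ j < w'.length := by omega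
            have hjne : j ≠ w'.length := by omega
            simp only [if_neg hjw, if_neg hjne] at hlt'
            exact absurd (my_wb_le_max (x := CStr.ofList α j) hMx) (not_le.mpr hlt')
  · -- no character below c : h = ofList w'
    refine ⟨CStr.ofList w', my_ofList_WF w', ?_, ?_⟩
    · refine ⟨w'.length, fun j hj => (my_ofList_cons_apply_lt c hj).symm, ?_⟩
      rw [my_ofList_apply_of_le (le_refl _), my_ofList_cons_length]
      exact WithBot.bot_lt_coe c
    · intro α hα
      obtain ⟨i, hag, hlt⟩ := hα
      have hin : i ≤ w'.length := by
        by_contra hc2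
        push_neg at hc2
        rw [my_ofList_apply_of_le (w := c :: w') (by simp; omega)] at hlt
        exact not_lt_bot hlt
      have hagw : ∀ k, k < i → CStr.ofList α k = CStr.ofList w' k := fun k hk => by
        rw [hag k hk, my_ofList_cons_apply_lt c (by omega)]
      apply my_colexLe_of_not_lt
      rintro ⟨j, hag', hlt'⟩
      rcases Nat.lt_or_ge i w'.length with hiw | hiw
      · rw [my_ofList_cons_apply_lt c hiw] at hlt
        rcases lt_trichotomy j i with hji | rfl | hij
        · rw [← hagw j hji] at hlt'
          exact lt_irrefl _ hlt'
        · exact lt_irrefl _ (hlt.trans hlt')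
        · rw [← hag' i hij] at hlt
          exact lt_irrefl _ hlt
      · have hi : i = w'.length := by omega
        subst hi
        rw [my_ofList_cons_length] at hlt
        have hbot : CStr.ofList α w'.length = ⊥ := my_wb_eq_bot_of_lt hlt hex
        have hlen : α.length ≤ w'.length := my_ofList_len_le hbot
        rcases Nat.lt_or_ge j w'.length with hjw | hjw
        · rw [← hagw j hjw] at hlt'
          exact lt_irrefl _ hlt'
        · rw [my_ofList_apply_of_le (w := w') (by omega),
            my_ofList_apply_of_le (w := α) (by omega)] at hlt'
          exact lt_irrefl _ hlt'

end MyMainAux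

/-- (Correctness of the reduction to interval partitioning.)
Let `K = {inf I_u : u ∈ Q} ∪ {sup I_u : u ∈ Q}` and, for a state `u`, let
`s_u = rank(inf I_u)`, `f_u = rank(sup I_u)`, `s'_u = 2s_u + 1`, `f'_u = 2f_u`,
`s''_u = min(s'_u, f'_u)`, `f''_u = max(s'_u, f'_u)`.  Then for distinct
states `u ≠ v` with `s_u ≤ s_v`: `f_u ≤ s_v` iff `f''_u < s''_v`. -/
theorem interval_partitioning_reduction_correct
    {A Q : Type*} [LinearOrder A] [Fintype A] [Fintype Q]
    (M : PDFA A Q) (hstart : M.NoIncomingStart) (hreach : M.Reachable)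
    (ginf gsup : Q → CStr A)
    (hinf : ∀ u, IsColexGLB (CStr.ofList '' M.I u) (ginf u))
    (hsup : ∀ u, IsColexLUB (CStr.ofList '' M.I u) (gsup u))
    (K : Set (CStr A)) (hK : K = {x | (∃ w, x = ginf w) ∨ (∃ w, x = gsup w)})
    (u v : Q) (huv : u ≠ v)
    (hsusv : colexRank K (ginf u) ≤ colexRank K (ginf v)) :
    colexRank K (gsup u) ≤ colexRank K (ginf v) ↔
      max (2 * colexRank K (ginf u) + 1) (2 * colexRank K (gsup u)) <
        min (2 * colexRank K (ginf v) + 1) (2 * colexRank K (gsup v)) := by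
  classical
  rcases isEmpty_or_nonempty A with hA | hA
  · exfalso
    obtain ⟨wu, hwu⟩ := hreach u
    obtain ⟨wv, hwv⟩ := hreach v
    cases wu with
    | nil =>
      cases wv with
      | nil =>
        apply huv
        have : some u = some v := hwu.symm.trans hwv
        exact Option.some_inj.mp this
      | cons a _ => exact hA.false a
    | cons a _ => exact hA.false a
  · obtain ⟨m, hm⟩ : ∃ m : A, ∀ x : A, m ≤ x :=
      ⟨Finset.univ.min' Finset.univ_nonempty,
        fun x => Finset.min'_le _ x (Finset.mem_univ x)⟩
    have hKfin : K.Finite := by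
      apply Set.Finite.subset ((Set.finite_range ginf).union (Set.finite_range gsup))
      rw [hK]
      rintro x (⟨w, rfl⟩ | ⟨w, rfl⟩)
      · exact Or.inl ⟨w, rfl⟩
      · exact Or.inr ⟨w, rfl⟩
    have hKinf : ∀ q, ginf q ∈ K := fun q => by rw [hK]; exact Or.inl ⟨q, rfl⟩
    have hKsup : ∀ q, gsup q ∈ K := fun q => by rw [hK]; exact Or.inr ⟨q, rfl⟩
    have hle : ∀ q, colexLe (ginf q) (gsup q) := fun q => by
      obtain ⟨w, hw⟩ := hreach q
      exact my_colexLe_trans ((hinf q).2.1 _ ⟨w, hw, rfl⟩) ((hsup q).2.1 _ ⟨w, hw, rfl⟩)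
    have hdisj : ∀ w : List A, w ∈ M.I u → w ∈ M.I v → False := fun w h1 h2 =>
      huv (Option.some_inj.mp (h1.symm.trans h2))
    have hattain : ∀ q : Q, ginf q = gsup q → ∃ w, w ∈ M.I q ∧ ginf q = CStr.ofList w := by
      intro q hq
      obtain ⟨w, hw⟩ := hreach q
      refine ⟨w, hw, ?_⟩
      have h1 : colexLe (ginf q) (CStr.ofList w) := (hinf q).2.1 _ ⟨w, hw, rfl⟩
      have h2 : colexLe (CStr.ofList w) (ginf q) := by
        rw [hq]; exact (hsup q).2.1 _ ⟨w, hw, rfl⟩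
      exact my_colexLe_antisymm h1 h2
    have hinf_att : ∀ (q : Q) (w : List A), ginf q = CStr.ofList w → w ∈ M.I q := by
      intro q w hq
      by_contra hwq
      have hlt : ∀ β ∈ M.I q, colexLt (CStr.ofList w) (CStr.ofList β) := by
        intro β hβ
        have h1 : colexLe (ginf q) (CStr.ofList β) := (hinf q).2.1 _ ⟨β, hβ, rfl⟩
        rw [hq] at h1
        rcases h1 with h1 | h1
        · exact h1
        · cases my_ofList_injective h1
          exact absurd hβ hwq
      obtain ⟨hsucc_lt, hsucc_le⟩ := my_succ_lemma hm w
      have h3 : colexLe (CStr.ofList (m :: w)) (ginf q) := by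
        apply (hinf q).2.2 _ (my_ofList_WF _)
        rintro f ⟨β, hβ, rfl⟩
        exact hsucc_le β (hlt β hβ)
      rw [hq] at h3
      exact my_not_colexLe_of_lt hsucc_lt h3
    have hsup_att : ∀ (q : Q) (w : List A), gsup q = CStr.ofList w → w ∈ M.I q := by
      intro q w hq
      by_contra hwq
      have hlt : ∀ β ∈ M.I q, colexLt (CStr.ofList β) (CStr.ofList w) := by
        intro β hβ
        have h1 : colexLe (CStr.ofList β) (gsup q) := (hsup q).2.1 _ ⟨β, hβ, rfl⟩
        rw [hq] at h1
        rcases h1 with h1 | h1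
        · exact h1
        · cases my_ofList_injective h1
          exact absurd hβ hwq
      obtain ⟨wq, hwq'⟩ := hreach q
      cases w with
      | nil =>
        obtain ⟨i, -, hi⟩ := hlt wq hwq'
        rw [my_ofList_apply_of_le (w := ([] : List A)) (by simp)] at hi
        exact not_lt_bot hi
      | cons c w' =>
        obtain ⟨h, hWF, hlt2, hbound⟩ := my_pred_lemma c w'
        have h3 : colexLe (gsup q) h := by
          apply (hsup q).2.2 _ hWF
          rintro f ⟨β, hβ, rfl⟩
          exact hbound β (hlt β hβ)
        rw [hq] at h3
        exact my_not_colexLe_of_lt hlt2 h3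
    have hab : colexRank K (ginf u) ≤ colexRank K (gsup u) := my_colexRank_mono hKfin (hle u)
    have hcd : colexRank K (ginf v) ≤ colexRank K (gsup v) := my_colexRank_mono hKfin (hle v)
    have hC1 : colexRank K (gsup u) ≠ colexRank K (ginf v) ∨
        colexRank K (ginf u) ≠ colexRank K (gsup u) := by
      by_contra hc
      push_neg at hc
      obtain ⟨hbc, hab'⟩ := hc
      have e1 : ginf u = gsup u := my_colexRank_injOn hKfin (hKinf u) (hKsup u) hab'
      have e2 : gsup u = ginf v := my_colexRank_injOn hKfin (hKsup u) (hKinf v) hbc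
      obtain ⟨w, hwI, hwe⟩ := hattain u e1
      have hv : ginf v = CStr.ofList w := by rw [← e2, ← e1, hwe]
      exact hdisj w hwI (hinf_att v w hv)
    have hC2 : colexRank K (gsup u) ≠ colexRank K (ginf v) ∨
        colexRank K (ginf v) ≠ colexRank K (gsup v) := by
      by_contra hc
      push_neg at hc
      obtain ⟨hbc, hcd'⟩ := hc
      have e2 : gsup u = ginf v := my_colexRank_injOn hKfin (hKsup u) (hKinf v) hbc
      have e1 : ginf v = gsup v := my_colexRank_injOn hKfin (hKinf v) (hKsup v) hcd'
      obtain ⟨w, hwI, hwe⟩ := hattain v e1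
      have hu : gsup u = CStr.ofList w := by rw [e2, hwe]
      exact hdisj w (hsup_att u w hu) hwI
    omega
end

section
/- Let A = (Q, Σ, δ, s, F) be an input-consistent DFA in which the initial state s has no incoming transitions and every state is reachable from s, and let u ∈ Q with u ≠ s. Then inf I_u = μ · λ(u), where μ is the co-lex minimum of the finite nonempty set {inf I_v : v ∈ δ⁻¹(u)}; symmetrically, sup I_u = ν · λ(u), where ν is the co-lex maximum of {sup I_v : v ∈ δ⁻¹(u)}. Here γ · a denotes appending character a at the end of the (possibly infinite) string γ. -/
/-- `suf_k`: the length-`k` suffix of a string; positions `≥ k` are cut off.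
(The `⊥` entries at positions `< k` play the role of the left-padding symbol
`#`, which is smaller than every character of the alphabet.) -/
def CStr.suf {A : Type*} (k : ℕ) (f : CStr A) : CStr A := fun i => if i < k then f i else ⊥

/-- `β^ω · α` : the left-infinite string obtained by concatenating infinitely
many copies of `β`, followed (at the right end) by `α`. -/
def CStr.omegaAppend {A : Type*} (b a : List A) : CStr A := fun i =>
  if i < a.length then CStr.ofList a i
  else CStr.ofList b ((i - a.length) % b.length)

/-- Appending one character at the (right) end of a possibly infinite string. -/
def CStr.snoc {A : Type*} (f : CStr A) (a : A) : CStr A := fun i =>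
  match i with
  | 0 => (a : WithBot A)
  | Nat.succ j => f j

/-- Removing the last `k` characters of a string. -/
def CStr.drop {A : Type*} (f : CStr A) (k : ℕ) : CStr A := fun i => f (i + k)

/-- `suf_m(x)` is a prefix of `suf_{2m}(y)`. -/
def ExtPrefix {A : Type*} (x y : CStr A) (m : ℕ) : Prop := ∀ j, j < m → x j = y (m + j)

/-- The set of extenders of `u` at distance `m` (used with `m = 2^k`), where
`g u` denotes the infimum string `inf I_u`:
`P(u) = {v ∈ Q : δ(v, suf_m(inf I_u)) = u ∧ suf_m(inf I_v) is a prefix of suf_{2m}(inf I_u)}`.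
(The first condition is expressed by exhibiting the genuine length-`m` word
`w = suf_m(inf I_u)` over the alphabet; if `inf I_u` is shorter than `m`, the
padded suffix contains `#` and no state can read it, as `# ∉ Σ`.) -/
def PDFA.Pset {A Q : Type*} (M : PDFA A Q) (g : Q → CStr A) (m : ℕ) (u : Q) : Set Q :=
  {v | (∃ w : List A, w.length = m ∧ (∀ j, j < m → CStr.ofList w j = g u j) ∧
          M.δStar v w = some u) ∧ ExtPrefix (g v) (g u) m}

/-! Every word reaching `u ≠ s` ends in `λ(u)` and is a word reaching some predecessor `v`
followed by `λ(u)`, so `I_u = ⋃_{v ∈ δ⁻¹(u)} I_v · λ(u)`. Appending a fixed letter commutes with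
infima of nonempty sets: a lower bound of `S · a` either has a last letter smaller than `a`, or
ends in `a` and, with that letter removed, is a lower bound of `S`. The infimum of a finite union
is the least of the infima, and symmetrically for suprema. -/

def PDFA.predecessors {A Q : Type*} (M : PDFA A Q) (u : Q) : Set Q :=
  {v | ∃ a, M.δ v a = some u}

namespace CStr

variable {A : Type*}

theorem WF.snoc {f : CStr A} (hf : f.WF) (a : A) : (f.snoc a).WF
  | 0, h => absurd h WithBot.coe_ne_bot
  | i + 1, h => hf i h

theorem WF.drop {f : CStr A} (hf : f.WF) (k : ℕ) : (f.drop k).WF := fun i h => by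
  simpa only [CStr.drop, Nat.add_right_comm i 1 k] using hf (i + k) h

theorem snoc_drop_one {f : CStr A} {a : A} (h : f 0 = a) : (f.drop 1).snoc a = f := by
  funext i
  cases i with
  | zero => exact h.symm
  | succ j => rfl

theorem ofList_apply (w : List A) (i : ℕ) : ofList w i = (w.reverse[i]? : WithBot A) := by
  by_cases h : i < w.length
  · rw [ofList, dif_pos h, List.getElem?_eq_getElem (by simpa using h), List.get_eq_getElem,
      List.getElem_reverse]
    rfl
  · rw [ofList, dif_neg h, List.getElem?_eq_none (by simpa using not_lt.mp h)]
    rfl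

theorem ofList_append_singleton (w : List A) (a : A) :
    ofList (w ++ [a]) = (ofList w).snoc a := by
  funext i
  cases i <;> simp [ofList_apply, CStr.snoc] <;> rfl

end CStr

section Colex

variable {A : Type*} [LinearOrder A] {f g h : CStr A}

theorem colexLt_iff_toLex_lt : colexLt f g ↔ toLex f < toLex g := Iff.rfl

theorem colexLe_iff_toLex_le : colexLe f g ↔ toLex f ≤ toLex g := by
  rw [le_iff_lt_or_eq, colexLe, colexLt_iff_toLex_lt, toLex_inj]
  rfl

theorem colexLe_trans (hfg : colexLe f g) (hgh : colexLe g h) : colexLe f h := by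
  rw [colexLe_iff_toLex_le] at *
  exact hfg.trans hgh

theorem colexLe_antisymm (hfg : colexLe f g) (hgf : colexLe g f) : f = g := by
  rw [colexLe_iff_toLex_le] at *
  exact toLex_inj.mp (hfg.antisymm hgf)

theorem colexLt_of_apply_zero_lt (h0 : f 0 < g 0) : colexLt f g :=
  ⟨0, fun _ hj => absurd hj (Nat.not_lt_zero _), h0⟩

theorem apply_zero_le_of_colexLe (hfg : colexLe f g) : f 0 ≤ g 0 := by
  rcases hfg with ⟨_ | i, he, hi⟩ | rfl
  · exact hi.le
  · exact (he 0 i.succ_pos).le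
  · exact le_rfl

theorem colexLe_snoc_snoc {a : A} : colexLe (f.snoc a) (g.snoc a) ↔ colexLe f g := by
  constructor
  · rintro (⟨_ | i, he, hi⟩ | hfg)
    · exact absurd hi (lt_irrefl _)
    · exact Or.inl ⟨i, fun j hj => he (j + 1) (Nat.succ_lt_succ hj), hi⟩
    · exact Or.inr (congrArg (CStr.drop · 1) hfg)
  · rintro (⟨i, he, hi⟩ | rfl)
    · refine Or.inl ⟨i + 1, fun j hj => ?_, hi⟩
      cases j with
      | zero => rfl
      | succ j => exact he j (Nat.lt_of_succ_lt_succ hj)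
    · exact Or.inr rfl

end Colex

section Bounds

variable {A : Type*} [LinearOrder A] {S : Set (CStr A)} {g g' : CStr A}

theorem IsColexGLB.unique (hg : IsColexGLB S g) (hg' : IsColexGLB S g') : g = g' :=
  colexLe_antisymm (hg'.2.2 g hg.1 hg.2.1) (hg.2.2 g' hg'.1 hg'.2.1)

theorem IsColexLUB.unique (hg : IsColexLUB S g) (hg' : IsColexLUB S g') : g = g' :=
  colexLe_antisymm (hg.2.2 g' hg'.1 hg'.2.1) (hg'.2.2 g hg.1 hg.2.1)

theorem IsColexGLB.snoc (hg : IsColexGLB S g) (a : A) (hS : S.Nonempty) :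
    IsColexGLB ((CStr.snoc · a) '' S) (g.snoc a) := by
  refine ⟨hg.1.snoc a, ?_, fun h hWF hlb => ?_⟩
  · rintro _ ⟨f, hf, rfl⟩
    exact colexLe_snoc_snoc.mpr (hg.2.1 f hf)
  obtain ⟨f₀, hf₀⟩ := hS
  rcases (apply_zero_le_of_colexLe (hlb _ ⟨f₀, hf₀, rfl⟩)).lt_or_eq with h0 | h0
  · exact Or.inl (colexLt_of_apply_zero_lt h0)
  · rw [← CStr.snoc_drop_one h0, colexLe_snoc_snoc]
    refine hg.2.2 _ (hWF.drop 1) fun f hf => ?_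
    rw [← colexLe_snoc_snoc (a := a), CStr.snoc_drop_one h0]
    exact hlb _ ⟨f, hf, rfl⟩

theorem IsColexLUB.snoc (hg : IsColexLUB S g) (a : A) (hS : S.Nonempty) :
    IsColexLUB ((CStr.snoc · a) '' S) (g.snoc a) := by
  refine ⟨hg.1.snoc a, ?_, fun h hWF hub => ?_⟩
  · rintro _ ⟨f, hf, rfl⟩
    exact colexLe_snoc_snoc.mpr (hg.2.1 f hf)
  obtain ⟨f₀, hf₀⟩ := hS
  rcases (apply_zero_le_of_colexLe (hub _ ⟨f₀, hf₀, rfl⟩)).lt_or_eq with h0 | h0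
  · exact Or.inl (colexLt_of_apply_zero_lt h0)
  · rw [← CStr.snoc_drop_one h0.symm, colexLe_snoc_snoc]
    refine hg.2.2 _ (hWF.drop 1) fun f hf => ?_
    rw [← colexLe_snoc_snoc (a := a), CStr.snoc_drop_one h0.symm]
    exact hub _ ⟨f, hf, rfl⟩

variable {ι : Type*} {P : Set ι} {T : ι → Set (CStr A)} {G : ι → CStr A} {i₀ : ι}

theorem isColexGLB_biUnion (hG : ∀ i ∈ P, IsColexGLB (T i) (G i)) (hi₀ : i₀ ∈ P)
    (hmin : ∀ i ∈ P, colexLe (G i₀) (G i)) : IsColexGLB (⋃ i ∈ P, T i) (G i₀) := by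
  refine ⟨(hG i₀ hi₀).1, fun f hf => ?_, fun h hWF hlb => ?_⟩
  · obtain ⟨i, hi, hfi⟩ := Set.mem_iUnion₂.mp hf
    exact colexLe_trans (hmin i hi) ((hG i hi).2.1 f hfi)
  · exact (hG i₀ hi₀).2.2 h hWF fun f hf => hlb f (Set.mem_biUnion hi₀ hf)

theorem isColexLUB_biUnion (hG : ∀ i ∈ P, IsColexLUB (T i) (G i)) (hi₀ : i₀ ∈ P)
    (hmax : ∀ i ∈ P, colexLe (G i) (G i₀)) : IsColexLUB (⋃ i ∈ P, T i) (G i₀) := by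
  refine ⟨(hG i₀ hi₀).1, fun f hf => ?_, fun h hWF hub => ?_⟩
  · obtain ⟨i, hi, hfi⟩ := Set.mem_iUnion₂.mp hf
    exact colexLe_trans ((hG i hi).2.1 f hfi) (hmax i hi)
  · exact (hG i₀ hi₀).2.2 h hWF fun f hf => hub f (Set.mem_biUnion hi₀ hf)

end Bounds

namespace PDFA

variable {A Q : Type*} (M : PDFA A Q)

theorem δStar_append_singleton (q : Q) (w : List A) (a : A) :
    M.δStar q (w ++ [a]) = (M.δStar q w).bind (M.δ · a) := by
  induction w generalizing q with
  | nil => simp [δStar]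
  | cons b w ih => simp [δStar, ih, Option.bind_assoc]

theorem append_singleton_mem_I_iff {w : List A} {a : A} {u : Q} :
    w ++ [a] ∈ M.I u ↔ ∃ v, w ∈ M.I v ∧ M.δ v a = some u := by
  simp only [I, Set.mem_ofPred_eq, δStar_append_singleton, Option.bind_eq_some_iff]

theorem image_ofList_I_eq_biUnion {lam : Q → A} (hic : M.InputConsistent lam) {u : Q}
    (hu : u ≠ M.start) :
    CStr.ofList '' M.I u =
      ⋃ v ∈ M.predecessors u, (CStr.snoc · (lam u)) '' (CStr.ofList '' M.I v) := by
  ext f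
  simp only [Set.mem_image, Set.mem_iUnion, exists_prop, predecessors, Set.mem_ofPred_eq]
  constructor
  · rintro ⟨w, hw, rfl⟩
    rcases List.eq_nil_or_concat w with rfl | ⟨w', b, rfl⟩
    · exact absurd (Option.some.inj hw).symm hu
    rw [List.concat_eq_append] at hw ⊢
    obtain ⟨v, hw', hb⟩ := (M.append_singleton_mem_I_iff).mp hw
    obtain rfl := hic v b u hb
    exact ⟨v, ⟨_, hb⟩, _, ⟨w', hw', rfl⟩, (CStr.ofList_append_singleton w' _).symm⟩
  · rintro ⟨v, ⟨a, ha⟩, _, ⟨w', hw', rfl⟩, rfl⟩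
    obtain rfl := hic v a u ha
    exact ⟨w' ++ [lam u], M.append_singleton_mem_I_iff.mpr ⟨v, hw', ha⟩,
      CStr.ofList_append_singleton w' _⟩

end PDFA

theorem infimum_supremum_recursion_on_predecessors_general
    {A Q : Type*} [LinearOrder A] [Fintype Q]
    (M : PDFA A Q) (lam : Q → A) (hic : M.InputConsistent lam)
    (hreach : M.Reachable)
    (ginf gsup : Q → CStr A)
    (hinf : ∀ w, IsColexGLB (CStr.ofList '' M.I w) (ginf w))
    (hsup : ∀ w, IsColexLUB (CStr.ofList '' M.I w) (gsup w))
    (u : Q) (hu : u ≠ M.start) :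
    (∃ v, (∃ a, M.δ v a = some u) ∧
        (∀ v', (∃ a, M.δ v' a = some u) → colexLe (ginf v) (ginf v')) ∧
        ginf u = CStr.snoc (ginf v) (lam u)) ∧
    (∃ v, (∃ a, M.δ v a = some u) ∧
        (∀ v', (∃ a, M.δ v' a = some u) → colexLe (gsup v') (gsup v)) ∧
        gsup u = CStr.snoc (gsup v) (lam u)) := by
  have hI := M.image_ofList_I_eq_biUnion hic hu
  have hne : ∀ v, (CStr.ofList '' M.I v).Nonempty := fun v =>
    Set.Nonempty.image _ (hreach v)
  have hpred : (M.predecessors u).Nonempty := by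
    obtain ⟨v, hv, -⟩ := Set.nonempty_biUnion.mp (hI ▸ hne u)
    exact ⟨v, hv⟩
  obtain ⟨v, hv, hmin⟩ :=
    Set.exists_min_image _ (fun v => toLex (ginf v)) (Set.toFinite _) hpred
  obtain ⟨v', hv', hmax⟩ :=
    Set.exists_max_image _ (fun v => toLex (gsup v)) (Set.toFinite _) hpred
  refine ⟨⟨v, hv, fun w hw => colexLe_iff_toLex_le.mpr (hmin w hw), (hinf u).unique ?_⟩,
    ⟨v', hv', fun w hw => colexLe_iff_toLex_le.mpr (hmax w hw), (hsup u).unique ?_⟩⟩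
  · rw [hI]
    exact isColexGLB_biUnion (fun w _ => (hinf w).snoc (lam u) (hne w)) hv
      fun w hw => colexLe_snoc_snoc.mpr (colexLe_iff_toLex_le.mpr (hmin w hw))
  · rw [hI]
    exact isColexLUB_biUnion (fun w _ => (hsup w).snoc (lam u) (hne w)) hv'
      fun w hw => colexLe_snoc_snoc.mpr (colexLe_iff_toLex_le.mpr (hmax w hw))

/-- For an input-consistent DFA whose initial state has no
incoming transitions and all of whose states are reachable, and a state
`u ≠ s`: `inf I_u = μ · λ(u)` where `μ` is the co-lex minimum of the (finite,
nonempty) set `{inf I_v : v ∈ δ⁻¹(u)}`; symmetrically `sup I_u = ν · λ(u)`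
where `ν` is the co-lex maximum of `{sup I_v : v ∈ δ⁻¹(u)}`. -/
theorem infimum_supremum_recursion_on_predecessors
    {A Q : Type*} [LinearOrder A] [Fintype A] [Fintype Q]
    (M : PDFA A Q) (lam : Q → A) (hic : M.InputConsistent lam)
    (hstart : M.NoIncomingStart) (hreach : M.Reachable)
    (ginf gsup : Q → CStr A)
    (hinf : ∀ w, IsColexGLB (CStr.ofList '' M.I w) (ginf w))
    (hsup : ∀ w, IsColexLUB (CStr.ofList '' M.I w) (gsup w))
    (u : Q) (hu : u ≠ M.start) :
    (∃ v, (∃ a, M.δ v a = some u) ∧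
        (∀ v', (∃ a, M.δ v' a = some u) → colexLe (ginf v) (ginf v')) ∧
        ginf u = CStr.snoc (ginf v) (lam u)) ∧
    (∃ v, (∃ a, M.δ v a = some u) ∧
        (∀ v', (∃ a, M.δ v' a = some u) → colexLe (gsup v') (gsup v)) ∧
        gsup u = CStr.snoc (gsup v) (lam u)) :=
  infimum_supremum_recursion_on_predecessors_general M lam hic hreach ginf gsup hinf hsup u hu
end

section
/- Let γ₁, γ₂ ∈ Σ⁺ be nonempty finite strings and let k' = |γ₁| + |γ₂| − gcd(|γ₁|, |γ₂|). Then the length-k' suffix of γ₁^ω is co-lex smaller than the length-k' suffix of γ₂^ω if and only if γ₁^ω < γ₂^ω in the co-lex order. -/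
/-- Stepping down by a period within an interval. -/
private lemma stepMod {α : Type*} (w : ℕ → α) (p L : ℕ) (hp : 0 < p)
    (hper : ∀ i, i + p < L → w (i + p) = w i) :
    ∀ i, i < L → w i = w (i % p) := by
  intro i
  induction i using Nat.strong_induction_on with
  | _ i ih =>
    intro hiL
    rcases lt_or_ge i p with h | h
    · rw [Nat.mod_eq_of_lt h]
    · have h1 := hper (i - p) (by omega)
      rw [Nat.sub_add_cancel h] at h1
      rw [h1, ih (i - p) (by omega) (by omega), Nat.mod_eq_sub_mod h]

/-- Global periodicity: reduce the index mod the period. -/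
private lemma globalMod {α : Type*} (u : ℕ → α) (p : ℕ) (hp : 0 < p)
    (hu : ∀ i, u (i + p) = u i) (j : ℕ) : u j = u (j % p) := by
  induction j using Nat.strong_induction_on with
  | _ j ih =>
    rcases lt_or_ge j p with h | h
    · rw [Nat.mod_eq_of_lt h]
    · have h1 := hu (j - p)
      rw [Nat.sub_add_cancel h] at h1
      rw [h1, ih (j - p) (by omega), Nat.mod_eq_sub_mod h]

/-- Fine–Wilf on an interval of length `p + q - gcd p q`. -/
private lemma fineWilf {α : Type*} :
    ∀ n p q : ℕ, p + q ≤ n → 0 < p → 0 < q → ∀ w : ℕ → α,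
    (∀ i, i + p < p + q - Nat.gcd p q → w (i + p) = w i) →
    (∀ i, i + q < p + q - Nat.gcd p q → w (i + q) = w i) →
    ∀ i j, i < p + q - Nat.gcd p q → j < p + q - Nat.gcd p q →
      i % Nat.gcd p q = j % Nat.gcd p q → w i = w j := by
  intro n
  induction n with
  | zero => intro p q h hp hq; omega
  | succ n ih =>
    intro p q hn hp hq w hP hQ i j hi hj hmod
    by_cases hpq : p ∣ q
    · -- gcd = p
      have hd : Nat.gcd p q = p := Nat.gcd_eq_left hpq
      rw [stepMod w p _ hp hP i hi, stepMod w p _ hp hP j hj]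
      rw [hd] at hmod
      rw [hmod]
    · by_cases hqp : q ∣ p
      · have hd : Nat.gcd p q = q := Nat.gcd_eq_right hqp
        rw [stepMod w q _ hq hQ i hi, stepMod w q _ hq hQ j hj]
        rw [hd] at hmod; rw [hmod]
      · -- neither divides; in particular p ≠ q, d < p, d < q
        have hd0 : 0 < Nat.gcd p q := Nat.gcd_pos_of_pos_left _ hp
        have hdp : Nat.gcd p q ∣ p := Nat.gcd_dvd_left p q
        have hdq : Nat.gcd p q ∣ q := Nat.gcd_dvd_right p q
        have hdlep : Nat.gcd p q ≤ p := Nat.le_of_dvd hp hdp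
        have hdleq : Nat.gcd p q ≤ q := Nat.le_of_dvd hq hdq
        rcases lt_trichotomy p q with hlt | heq | hgt
        · -- p < q : recurse on (p, q - p)
          have hgcd : Nat.gcd p (q - p) = Nat.gcd p q := by
            conv_rhs => rw [show q = (q - p) + p by omega]
            rw [Nat.gcd_add_self_right]
          have hdsub : Nat.gcd p q ∣ q - p := (Nat.dvd_sub hdq hdp)
          have hdle : Nat.gcd p q ≤ q - p := Nat.le_of_dvd (by omega) hdsub
          have key := ih p (q - p) (by omega) hp (by omega) w
            (fun i hi => hP i (by rw [hgcd] at hi; omega))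
            (fun i hi => by
              rw [hgcd] at hi
              have e1 := hP (i + (q - p)) (by omega)
              rw [show i + (q - p) + p = i + q by omega] at e1
              rw [← e1]
              exact hQ i (by omega))
          rw [hgcd] at key
          rw [stepMod w p _ hp hP i hi, stepMod w p _ hp hP j hj]
          exact key (i % p) (j % p) (by have := Nat.mod_lt i hp; omega)
            (by have := Nat.mod_lt j hp; omega)
            (by rw [Nat.mod_mod_of_dvd _ hdp, Nat.mod_mod_of_dvd _ hdp]; exact hmod)
        · exact absurd (heq ▸ dvd_refl p) hpq
        · -- q < p : recurse on (p - q, q)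
          have hgcd : Nat.gcd (p - q) q = Nat.gcd p q := by
            conv_rhs => rw [show p = (p - q) + q by omega]
            rw [Nat.gcd_add_self_left]
          have hdsub : Nat.gcd p q ∣ p - q := (Nat.dvd_sub hdp hdq)
          have hdle : Nat.gcd p q ≤ p - q := Nat.le_of_dvd (by omega) hdsub
          have key := ih (p - q) q (by omega) (by omega) hq w
            (fun i hi => by
              rw [hgcd] at hi
              have e1 := hQ (i + (p - q)) (by omega)
              rw [show i + (p - q) + q = i + p by omega] at e1
              rw [← e1]
              exact hP i (by omega))
            (fun i hi => hQ i (by rw [hgcd] at hi; omega))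
          rw [hgcd] at key
          rw [stepMod w q _ hq hQ i hi, stepMod w q _ hq hQ j hj]
          exact key (i % q) (j % q) (by have := Nat.mod_lt i hq; omega)
            (by have := Nat.mod_lt j hq; omega)
            (by rw [Nat.mod_mod_of_dvd _ hdq, Nat.mod_mod_of_dvd _ hdq]; exact hmod)

/-- If two globally periodic sequences agree on `[0, p + q - gcd p q)`, they agree everywhere. -/
private lemma periodicEqOfAgree {α : Type*} (u v : ℕ → α) (p q : ℕ)
    (hp : 0 < p) (hq : 0 < q)
    (hu : ∀ i, u (i + p) = u i) (hv : ∀ i, v (i + q) = v i)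
    (h : ∀ j, j < p + q - Nat.gcd p q → u j = v j) : ∀ j, u j = v j := by
  have hd0 : 0 < Nat.gcd p q := Nat.gcd_pos_of_pos_left _ hp
  have hdlep : Nat.gcd p q ≤ p := Nat.le_of_dvd hp (Nat.gcd_dvd_left p q)
  have hdleq : Nat.gcd p q ≤ q := Nat.le_of_dvd hq (Nat.gcd_dvd_right p q)
  have key := fineWilf (p + q) p q le_rfl hp hq u
    (fun i _ => hu i)
    (fun i hi => by rw [h (i + q) hi, hv i, ← h i (by omega)])
  intro j
  rw [globalMod u p hp hu j, globalMod v q hq hv j, ← h (j % q) (by have := Nat.mod_lt j hq; omega)]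
  exact key (j % p) (j % q) (by have := Nat.mod_lt j hp; omega)
    (by have := Nat.mod_lt j hq; omega)
    (by rw [Nat.mod_mod_of_dvd _ (Nat.gcd_dvd_left p q), Nat.mod_mod_of_dvd _ (Nat.gcd_dvd_right p q)])

/-- (cf. Mantaci et al.)  For nonempty finite strings
`γ₁, γ₂ ∈ Σ⁺` and `k' = |γ₁| + |γ₂| − gcd(|γ₁|, |γ₂|)`, the length-`k'`
suffix of `γ₁^ω` is co-lex smaller than the length-`k'` suffix of `γ₂^ω`
iff `γ₁^ω < γ₂^ω` in the co-lex order. -/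
theorem omega_power_colex_order_determined_by_suffix
    {A : Type*} [LinearOrder A] [Fintype A]
    (γ₁ γ₂ : List A) (h₁ : γ₁ ≠ []) (h₂ : γ₂ ≠ []) :
    colexLt (CStr.suf (γ₁.length + γ₂.length - Nat.gcd γ₁.length γ₂.length)
               (CStr.omegaAppend γ₁ []))
            (CStr.suf (γ₁.length + γ₂.length - Nat.gcd γ₁.length γ₂.length)
               (CStr.omegaAppend γ₂ [])) ↔
    colexLt (CStr.omegaAppend γ₁ []) (CStr.omegaAppend γ₂ []) := by
  have hp : 0 < γ₁.length := List.length_pos_iff.mpr h₁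
  have hq : 0 < γ₂.length := List.length_pos_iff.mpr h₂
  set p := γ₁.length with hpdef
  set q := γ₂.length with hqdef
  have hd0 : 0 < Nat.gcd p q := Nat.gcd_pos_of_pos_left _ hp
  have hdlep : Nat.gcd p q ≤ p := Nat.le_of_dvd hp (Nat.gcd_dvd_left p q)
  set k := p + q - Nat.gcd p q with hk
  set f := CStr.omegaAppend γ₁ ([] : List A) with hfdef
  set g := CStr.omegaAppend γ₂ ([] : List A) with hgdef
  have hfe : ∀ i, f i = CStr.ofList γ₁ (i % p) := by
    intro i; simp [hfdef, CStr.omegaAppend, hpdef]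
  have hge : ∀ i, g i = CStr.ofList γ₂ (i % q) := by
    intro i; simp [hgdef, CStr.omegaAppend, hqdef]
  have hfp : ∀ i, f (i + p) = f i := by
    intro i; rw [hfe, hfe, Nat.add_mod_right]
  have hgq : ∀ i, g (i + q) = g i := by
    intro i; rw [hge, hge, Nat.add_mod_right]
  have keyext : (∀ j, j < k → f j = g j) → ∀ j, f j = g j :=
    periodicEqOfAgree f g p q hp hq hfp hgq
  constructor
  · rintro ⟨i, hagree, hlt⟩
    have hik : i < k := by
      by_contra hcon
      simp only [CStr.suf, if_neg hcon] at hlt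
      exact lt_irrefl _ hlt
    refine ⟨i, fun j hj => ?_, ?_⟩
    · have h3 := hagree j hj
      simpa only [CStr.suf, if_pos (hj.trans hik)] using h3
    · simpa only [CStr.suf, if_pos hik] using hlt
  · rintro ⟨i, hagree, hlt⟩
    have hik : i < k := by
      by_contra hcon
      push_neg at hcon
      have hall := keyext (fun j hj => hagree j (by omega))
      exact lt_irrefl _ (hall i ▸ hlt)
    refine ⟨i, fun j hj => ?_, ?_⟩
    · simp only [CStr.suf, if_pos (hj.trans hik)]
      exact hagree j hj
    · simp only [CStr.suf, if_pos hik]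
      exact hlt
end
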